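/- If a linearly ordered field is Dedekind complete, then every continuous injective function on a nondegenerate closed bounded interval is an open map onto its image. -/

import Mathlib

/-!
Dedekind completeness makes the order conditionally complete, so `[a,b]` is compact. A continuous
injective map on a compact set `K` into a Hausdorff space sends `K \ U` to a compact, hence
closed, set, and by injectivity its complement cuts `f '' (U ∩ K)` out of `f '' K`.
-/

open Set

/-- Greatest lower bounds are least upper bounds of the sets of lower bounds; the junk value
`Classical.arbitrary α` is the supremum and infimum of every set without one. -/
noncomputable abbrev ConditionallyCompleteLinearOrder.ofExistsIsLUB (α : Type*) [LinearOrder α]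
    [Nonempty α] (h : ∀ s : Set α, s.Nonempty → BddAbove s → ∃ l, IsLUB s l) :
    ConditionallyCompleteLinearOrder α :=
  open scoped Classical in
  { ‹LinearOrder α›, LinearOrder.toLattice with
    sSup := fun s ↦ if hs : s.Nonempty ∧ BddAbove s then (h s hs.1 hs.2).choose
      else Classical.arbitrary α
    sInf := fun s ↦ if hs : s.Nonempty ∧ BddBelow s then
        (h (lowerBounds s) hs.2 hs.1.bddAbove_lowerBounds).choose
      else Classical.arbitrary α
    isLUB_csSup := fun s hne hbdd ↦ by
      rw [dif_pos ⟨hne, hbdd⟩]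
      exact (h s hne hbdd).choose_spec
    isGLB_csInf := fun s hne hbdd ↦ by
      rw [dif_pos ⟨hne, hbdd⟩]
      exact isLUB_lowerBounds.mp (h _ hbdd hne.bddAbove_lowerBounds).choose_spec
    csSup_of_not_bddAbove := fun s hs ↦ by
      rw [dif_neg (fun h ↦ hs h.2), dif_neg (fun h ↦ h.1.ne_empty rfl)]
    csInf_of_not_bddBelow := fun s hs ↦ by
      rw [dif_neg (fun h ↦ hs h.2), dif_neg (fun h ↦ h.1.ne_empty rfl)] }

theorem isCompact_Icc_of_exists_isLUB {α : Type*} [LinearOrder α] [TopologicalSpace α]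
    [OrderTopology α] (h : ∀ s : Set α, s.Nonempty → BddAbove s → ∃ l, IsLUB s l) (a b : α) :
    IsCompact (Icc a b) :=
  haveI : Nonempty α := ⟨a⟩
  letI := ConditionallyCompleteLinearOrder.ofExistsIsLUB α h
  isCompact_Icc

theorem IsCompact.exists_isOpen_image_inter_eq {X Y : Type*} [TopologicalSpace X]
    [TopologicalSpace Y] [T2Space Y] {K : Set X} (hK : IsCompact K) {f : X → Y}
    (hf : ContinuousOn f K) (hinj : InjOn f K) {U : Set X} (hU : IsOpen U) :
    ∃ W, IsOpen W ∧ f '' (U ∩ K) = W ∩ f '' K := by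
  have hclosed : IsClosed (f '' (K \ U)) :=
    ((hK.diff hU).image_of_continuousOn (hf.mono sdiff_subset)).isClosed
  refine ⟨(f '' (K \ U))ᶜ, hclosed.isOpen_compl, ?_⟩
  rw [inter_comm U K, hinj.image_sdiff, inter_comm _ (f '' K), ← sdiff_eq,
    sdiff_sdiff_cancel_left (image_mono inter_subset_left)]

theorem dedekind_complete_open_map_general (F : Type*) [LinearOrder F]
    [TopologicalSpace F] [OrderTopology F]
    (hcomp : ∀ S : Set F, S.Nonempty → BddAbove S → ∃ l, IsLUB S l)
    (a b : F) (f : F → F)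
    (hf : ContinuousOn f (Set.Icc a b)) (hinj : Set.InjOn f (Set.Icc a b)) :
    ∀ V : Set F, (∃ U, IsOpen U ∧ V = U ∩ Set.Icc a b) →
      ∃ W, IsOpen W ∧ f '' V = W ∩ f '' Set.Icc a b := by
  rintro V ⟨U, hU, rfl⟩
  exact (isCompact_Icc_of_exists_isLUB hcomp a b).exists_isOpen_image_inter_eq hf hinj hU

/-- In a Dedekind complete linearly ordered field, every continuous injective
function on a nondegenerate closed bounded interval is an open map onto its
image: the image of every relatively open subset of `[a,b]` is relatively open
in `f '' [a,b]`. -/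
theorem dedekind_complete_open_map (F : Type*) [Field F] [LinearOrder F] [IsStrictOrderedRing F]
    [TopologicalSpace F] [OrderTopology F]
    (hcomp : ∀ S : Set F, S.Nonempty → BddAbove S → ∃ l, IsLUB S l)
    (a b : F) (hab : a < b) (f : F → F)
    (hf : ContinuousOn f (Set.Icc a b)) (hinj : Set.InjOn f (Set.Icc a b)) :
    ∀ V : Set F, (∃ U, IsOpen U ∧ V = U ∩ Set.Icc a b) →
      ∃ W, IsOpen W ∧ f '' V = W ∩ f '' Set.Icc a b :=
  dedekind_complete_open_map_general F hcomp a b f hf hinj
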